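/- The Single Issue Win criterion is correct: there exists a nonempty subset S of issues such that for all j ≠ 1, the Hamming distance from v to c1 on S is at most the Hamming distance from v to c_j on S, if and only if there exists a single issue k such that either c1 agrees with v on k, or no candidate c_j (j ≠ 1) agrees with v on k. -/

import Mathlib

/-!
A singleton `{k}` is a winning issue set as soon as `c1` agrees with `v` on `k` (distance `0`) or
every rival disagrees with `v` on `k` (distance `1`, the maximum on a singleton). Conversely, if
`c1` disagrees with `v` everywhere on a winning set `S`, its distance is the maximum `|S|`, which
forces every rival to disagree with `v` on all of `S` as well.
-/

/-- Hamming distance restricted to a set of issues. -/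
def hamOn {ℓ : ℕ} (S : Finset (Fin ℓ)) (x y : Fin ℓ → Bool) : ℕ :=
  (S.filter (fun k => x k ≠ y k)).card

section hamOn

variable {ℓ : ℕ} (S : Finset (Fin ℓ)) (x y : Fin ℓ → Bool)

theorem hamOn_le_card : hamOn S x y ≤ S.card :=
  Finset.card_filter_le _ _

theorem hamOn_eq_card_iff : hamOn S x y = S.card ↔ ∀ k ∈ S, x k ≠ y k :=
  Finset.card_filter_eq_iff

theorem hamOn_singleton (k : Fin ℓ) : hamOn {k} x y = if x k = y k then 0 else 1 := by
  by_cases h : x k = y k <;> simp [hamOn, Finset.filter_singleton, h]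

end hamOn

/-- correctness of the Single Issue Win criterion: c1 can win
the single-voter binary election with best-case tie-breaking on some
nonempty issue set iff some single issue k satisfies: c1 agrees with v on k
or no other candidate agrees with v on k. -/
theorem single_issue_win_correct
    (ℓ m : ℕ) (c1 : Fin ℓ → Bool) (c : Fin m → Fin ℓ → Bool) (v : Fin ℓ → Bool) :
    (∃ S : Finset (Fin ℓ), S.Nonempty ∧
        ∀ j : Fin m, hamOn S v c1 ≤ hamOn S v (c j))
      ↔ (∃ k : Fin ℓ, c1 k = v k ∨ ∀ j : Fin m, c j k ≠ v k) := by
  constructor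
  · rintro ⟨S, ⟨k, hk⟩, hwin⟩
    by_cases hagree : ∃ i ∈ S, c1 i = v i
    · obtain ⟨i, -, hi⟩ := hagree
      exact ⟨i, Or.inl hi⟩
    push Not at hagree
    have hc1 : hamOn S v c1 = S.card :=
      (hamOn_eq_card_iff S v c1).2 fun i hi => (hagree i hi).symm
    refine ⟨k, Or.inr fun j => ?_⟩
    have hcj : hamOn S v (c j) = S.card := (hamOn_le_card S v (c j)).antisymm (hc1 ▸ hwin j)
    exact ((hamOn_eq_card_iff S v (c j)).1 hcj k hk).symm
  · rintro ⟨k, hk⟩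
    refine ⟨{k}, Finset.singleton_nonempty k, fun j => ?_⟩
    rcases hk with hagree | hrivals
    · rw [hamOn_singleton, if_pos hagree.symm]
      exact Nat.zero_le _
    · rw [hamOn_singleton v (c j), if_neg (hrivals j).symm]
      exact (hamOn_le_card {k} v c1).trans_eq (Finset.card_singleton k)
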